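/- Let 𝔤 be the 4-dimensional real Lie algebra with basis X₁, X₂, X₃, X₄ and nonzero brackets [X₂,X₃] = -X₁, [X₄,X₂] = X₂, [X₄,X₃] = -X₃. Fix q ∈ ℝ and define J by JX₁ = X₂, JX₂ = -X₁, JX₃ = X₄ - qX₂, JX₄ = -X₃ - qX₁. Then the bracket satisfies the Jacobi identity, J² = -id, and the Nijenhuis tensor of J vanishes. -/

import Mathlib

/-- The bracket of the 4-dimensional solvable Lie algebra with basis
`X₁, X₂, X₃, X₄` (coordinates `0,1,2,3`) and nonzero brackets
`[X₂,X₃] = -X₁`, `[X₄,X₂] = X₂`, `[X₄,X₃] = -X₃`, extended bilinearly. -/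
def br17 (x y : Fin 4 → ℝ) : Fin 4 → ℝ :=
  ![-(x 1 * y 2 - x 2 * y 1), x 3 * y 1 - x 1 * y 3, -(x 3 * y 2 - x 2 * y 3), 0]

/-- For `q ∈ ℝ`, the almost complex structure with `JX₁ = X₂`, `JX₂ = -X₁`,
`JX₃ = X₄ - qX₂`, `JX₄ = -X₃ - qX₁`, extended linearly. -/
def J17 (q : ℝ) (x : Fin 4 → ℝ) : Fin 4 → ℝ :=
  ![-(x 1) - q * x 3, x 0 - q * x 2, -(x 3), x 2]

def nijenhuis {V : Type*} [AddCommGroup V] (br : V → V → V) (J : V → V) (x y : V) : V :=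
  br (J x) (J y) - J (br (J x) y) - J (br x (J y)) - br x y

lemma br17_jacobi (x y z : Fin 4 → ℝ) :
    br17 x (br17 y z) + br17 y (br17 z x) + br17 z (br17 x y) = 0 := by
  funext i
  fin_cases i <;>
    simp only [br17, Pi.add_apply, Pi.zero_apply, Fin.zero_eta, Fin.mk_one, Fin.reduceFinMk,
      Matrix.cons_val] <;>
    ring

lemma J17_J17 (q : ℝ) (x : Fin 4 → ℝ) : J17 q (J17 q x) = -x := by
  funext i
  fin_cases i <;>
    simp only [J17, Pi.neg_apply, Fin.zero_eta, Fin.mk_one, Fin.reduceFinMk, Matrix.cons_val] <;>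
    ring

lemma nijenhuis_br17_J17 (q : ℝ) (x y : Fin 4 → ℝ) : nijenhuis br17 (J17 q) x y = 0 := by
  funext i
  fin_cases i <;>
    simp only [nijenhuis, br17, J17, Pi.sub_apply, Pi.zero_apply, Fin.zero_eta, Fin.mk_one,
      Fin.reduceFinMk, Matrix.cons_val] <;>
    ring

/-- On the solvable Lie algebra of Inoue surfaces of type `S⁺`/`S⁻`
(`[X₂,X₃] = -X₁`, `[X₄,X₂] = X₂`, `[X₄,X₃] = -X₃`, all other brackets zero),
the bracket satisfies the Jacobi identity, and for each `q ∈ ℝ` the map `J`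
with `JX₁ = X₂`, `JX₂ = -X₁`, `JX₃ = X₄ - qX₂`, `JX₄ = -X₃ - qX₁` satisfies
`J² = -id` and has vanishing Nijenhuis tensor. -/
theorem stmt_17 (q : ℝ) :
    (∀ x y z : Fin 4 → ℝ,
      br17 x (br17 y z) + br17 y (br17 z x) + br17 z (br17 x y) = 0) ∧
    (∀ x : Fin 4 → ℝ, J17 q (J17 q x) = -x) ∧
    (∀ x y : Fin 4 → ℝ,
      br17 (J17 q x) (J17 q y) - J17 q (br17 (J17 q x) y)
        - J17 q (br17 x (J17 q y)) - br17 x y = 0) :=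
  ⟨br17_jacobi, J17_J17 q, nijenhuis_br17_J17 q⟩
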